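/- arXiv:1907.05420 — 2 statements merged into one kernel-verified Lean document; each statement's English description precedes it below -/
import Mathlib

section
/- Let H be a symmetric n × n real matrix and J an m × n real matrix of full row rank m. Then the symmetric saddle-point matrix K = [[H, Jᵀ], [J, 0]] of size (n + m) has inertia (n, m, 0) — that is, exactly n positive eigenvalues, m negative eigenvalues, and no zero eigenvalues — if and only if H is positive definite on the null space of J, i.e., dᵀ H d > 0 for every nonzero d ∈ ℝ^n with J d = 0. -/
/-!
Write `Q` for the quadratic form `x ↦ xᵀ K x`. Diagonalising `K` by an orthogonal matrix shows
that `Q` is a weighted sum of squares with the eigenvalues of `K` as weights, so by Sylvester's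
law of inertia the numbers of positive and negative eigenvalues are the maximal dimensions of
subspaces on which `Q` is positive, resp. negative definite, and the number of zero eigenvalues is
the dimension of the radical of `Q`. In block coordinates `Q (d, y) = dᵀ H d + 2 (J d)ᵀ y`. It
vanishes on the `m`-dimensional subspace `d = 0`, which leaves room for at most `n` positive
directions; if some `d ≠ 0` with `J d = 0` had `dᵀ H d ≤ 0`, adding the line through `(d, 0)`
would leave room for fewer than `n`. Conversely, if `H` is positive definite on `ker J`, then
`Q ≥ 0` on the `n`-dimensional subspace `ker J × ℝᵐ`, so there are at most `m` negative
directions, and the radical is trivial because `Jᵀ` is injective; the three counts add up to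
`n + m`.
-/

open Matrix QuadraticMap QuadraticForm Module

lemma Submodule.finrank_prod {K M N : Type*} [Field K] [AddCommGroup M] [Module K M]
    [AddCommGroup N] [Module K N] [FiniteDimensional K M] [FiniteDimensional K N]
    (p : Submodule K M) (q : Submodule K N) :
    finrank K (p.prod q) = finrank K p + finrank K q := by
  rw [← p.range_subtype, ← q.range_subtype, ← LinearMap.range_prodMap,
    LinearMap.finrank_range_of_inj (p.injective_subtype.prodMap q.injective_subtype),
    Module.finrank_prod, p.range_subtype, q.range_subtype]

namespace Matrix

section Rank

variable {m n K : Type*} [Field K]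

lemma rank_add_finrank_ker_mulVecLin [Fintype n] (A : Matrix m n K) :
    A.rank + finrank K (LinearMap.ker A.mulVecLin) = Fintype.card n :=
  (LinearMap.finrank_range_add_finrank_ker _).trans (finrank_fintype_fun_eq_card K)

lemma ker_mulVecLin_transpose_eq_bot [Fintype m] [Fintype n] {A : Matrix m n K}
    (hA : A.rank = Fintype.card m) : LinearMap.ker Aᵀ.mulVecLin = ⊥ := by
  have := Aᵀ.rank_add_finrank_ker_mulVecLin
  rw [rank_transpose, hA] at this
  exact Submodule.finrank_eq_zero.mp (by omega)

end Rank

section QuadraticForm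

variable {ι R : Type*} [Fintype ι] [DecidableEq ι] [CommRing R]

lemma toQuadraticForm'_apply (A : Matrix ι ι R) (x : ι → R) :
    A.toQuadraticForm' x = x ⬝ᵥ A *ᵥ x :=
  A.toLinearMap₂'_apply' x x

lemma toQuadraticForm'_mulVec (A P : Matrix ι ι R) (x : ι → R) :
    A.toQuadraticForm' (P *ᵥ x) = (Pᵀ * A * P).toQuadraticForm' x := by
  simp only [toQuadraticForm'_apply, dotProduct_mulVec, ← mulVec_mulVec, vecMul_vecMul,
    vecMul_transpose]

lemma toQuadraticForm'_diagonal (w : ι → R) :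
    (diagonal w).toQuadraticForm' = weightedSumSquares R w := by
  ext x
  simp only [toQuadraticForm'_apply, dotProduct, mulVec_diagonal, weightedSumSquares_apply,
    smul_eq_mul]
  exact Finset.sum_congr rfl fun i _ => by ring

end QuadraticForm

namespace IsHermitian

variable {ι : Type*} [Fintype ι] [DecidableEq ι] {A : Matrix ι ι ℝ} (hA : A.IsHermitian)

lemma transpose_eigenvectorUnitary_mul_mul :
    (hA.eigenvectorUnitary : Matrix ι ι ℝ)ᵀ * A * hA.eigenvectorUnitary =
      diagonal hA.eigenvalues := by
  simpa [star_eq_conjTranspose] using hA.conjStarAlgAut_star_eigenvectorUnitary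

theorem equivalent_weightedSumSquares :
    A.toQuadraticForm'.Equivalent (weightedSumSquares ℝ hA.eigenvalues) := by
  refine ⟨(QuadraticMap.IsometryEquiv.mk (UnitaryGroup.toLinearEquiv hA.eigenvectorUnitary)
    fun c => ?_).symm⟩
  change A.toQuadraticForm' (hA.eigenvectorUnitary *ᵥ c) = _
  rw [toQuadraticForm'_mulVec, hA.transpose_eigenvectorUnitary_mul_mul, toQuadraticForm'_diagonal]

theorem card_pos_eigenvalues :
    Fintype.card {i // 0 < hA.eigenvalues i} = sigPos A.toQuadraticForm' :=
  (Set.fintypeCard_eq_ncard {i | 0 < hA.eigenvalues i}).trans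
    (sigPos_of_equiv_weightedSumSquares hA.equivalent_weightedSumSquares).symm

theorem card_neg_eigenvalues :
    Fintype.card {i // hA.eigenvalues i < 0} = sigNeg A.toQuadraticForm' :=
  (Set.fintypeCard_eq_ncard {i | hA.eigenvalues i < 0}).trans
    (sigNeg_of_equiv_weightedSumSquares hA.equivalent_weightedSumSquares).symm

theorem card_zero_eigenvalues :
    Fintype.card {i // hA.eigenvalues i = 0} = finrank ℝ A.toQuadraticForm'.radical :=
  (Set.fintypeCard_eq_ncard {i | hA.eigenvalues i = 0}).trans
    (finrank_radical_of_equiv_weightedSumSquares hA.equivalent_weightedSumSquares).symm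

end IsHermitian

section SaddlePoint

variable {α β 𝕜 : Type*} [Fintype α] [Fintype β] [DecidableEq α] [DecidableEq β] [Field 𝕜]

def saddlePointForm (H : Matrix α α 𝕜) (J : Matrix β α 𝕜) :
    QuadraticForm 𝕜 ((α → 𝕜) × (β → 𝕜)) :=
  (fromBlocks H Jᵀ J 0).toQuadraticForm'.comp
    (LinearEquiv.sumArrowLequivProdArrow α β 𝕜 𝕜).symm.toLinearMap

lemma equivalent_saddlePointForm (H : Matrix α α 𝕜) (J : Matrix β α 𝕜) :
    (fromBlocks H Jᵀ J 0).toQuadraticForm'.Equivalent (saddlePointForm H J) :=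
  ⟨isometryEquivOfCompLinearEquiv _ _⟩

variable {H : Matrix α α 𝕜} {J : Matrix β α 𝕜}

lemma saddlePointForm_apply (d : α → 𝕜) (y : β → 𝕜) :
    saddlePointForm H J (d, y) = d ⬝ᵥ H *ᵥ d + 2 * (J *ᵥ d ⬝ᵥ y) := by
  change (fromBlocks H Jᵀ J 0).toQuadraticForm' (Sum.elim d y) = _
  rw [toQuadraticForm'_apply, fromBlocks_mulVec, Sum.elim_comp_inl, Sum.elim_comp_inr,
    sumElim_dotProduct_sumElim, zero_mulVec, add_zero, dotProduct_add, dotProduct_mulVec d Jᵀ y,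
    vecMul_transpose, dotProduct_comm y]
  ring

variable [LinearOrder 𝕜]

variable (H J) in
lemma sigPos_saddlePointForm_le : sigPos (saddlePointForm H J) ≤ Fintype.card α := by
  have hV : ∀ x ∈ (⊥ : Submodule 𝕜 (α → 𝕜)).prod ⊤, saddlePointForm H J x ≤ 0 := by
    rintro ⟨d, y⟩ ⟨hd, -⟩
    obtain rfl : d = 0 := hd
    simp [saddlePointForm_apply]
  have := sigPos_add_finrank_le_of_nonpos hV
  simp only [Submodule.finrank_prod, finrank_bot, finrank_top, finrank_prod,
    finrank_fintype_fun_eq_card] at this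
  omega

variable [IsStrictOrderedRing 𝕜]

lemma sigPos_saddlePointForm_lt {d : α → 𝕜} (hd : d ≠ 0) (hJd : J *ᵥ d = 0)
    (hHd : d ⬝ᵥ H *ᵥ d ≤ 0) : sigPos (saddlePointForm H J) < Fintype.card α := by
  have hV : ∀ x ∈ (𝕜 ∙ d).prod ⊤, saddlePointForm H J x ≤ 0 := by
    rintro ⟨_, y⟩ ⟨hx, -⟩
    obtain ⟨t, rfl⟩ := Submodule.mem_span_singleton.mp hx
    simp only [saddlePointForm_apply, mulVec_smul, hJd, smul_zero, zero_dotProduct, mul_zero,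
      add_zero, dotProduct_smul, smul_dotProduct, smul_eq_mul, ← mul_assoc]
    exact mul_nonpos_of_nonneg_of_nonpos (mul_self_nonneg t) hHd
  have := sigPos_add_finrank_le_of_nonpos hV
  simp only [Submodule.finrank_prod, finrank_span_singleton hd, finrank_top, finrank_prod,
    finrank_fintype_fun_eq_card] at this
  omega

lemma sigNeg_saddlePointForm_le_rank (hH : ∀ d, J *ᵥ d = 0 → 0 ≤ d ⬝ᵥ H *ᵥ d) :
    sigNeg (saddlePointForm H J) ≤ J.rank := by
  have hV : ∀ x ∈ (LinearMap.ker J.mulVecLin).prod ⊤, (-saddlePointForm H J) x ≤ 0 := by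
    rintro ⟨d, y⟩ ⟨hd : J *ᵥ d = 0, -⟩
    simpa [saddlePointForm_apply, hd] using hH d hd
  have := sigPos_add_finrank_le_of_nonpos hV
  have := J.rank_add_finrank_ker_mulVecLin
  simp only [sigPos_neg, Submodule.finrank_prod, finrank_top, finrank_prod,
    finrank_fintype_fun_eq_card] at *
  omega

lemma radical_saddlePointForm_eq_bot (hH : ∀ d, d ≠ 0 → J *ᵥ d = 0 → 0 < d ⬝ᵥ H *ᵥ d)
    (hJ : J.rank = Fintype.card β) : (saddlePointForm H J).radical = ⊥ := by
  refine (Submodule.eq_bot_iff _).mpr fun ⟨d, y⟩ hx => ?_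
  obtain ⟨h0, hadd⟩ := mem_radical_iff'.mp hx
  rw [saddlePointForm_apply] at h0
  have hJd : J *ᵥ d = 0 := by
    have h := hadd (0, J *ᵥ d)
    simp only [Prod.mk_add_mk, add_zero, saddlePointForm_apply, dotProduct_add, mul_add,
      ← add_assoc, h0, zero_add, mulVec_zero, zero_dotProduct, mul_zero, mul_eq_zero,
      two_ne_zero, false_or] at h
    exact dotProduct_self_eq_zero.mp h
  obtain rfl : d = 0 := by
    by_contra hd
    simp only [hJd, zero_dotProduct, mul_zero, add_zero] at h0
    exact (hH d hd hJd).ne' h0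
  have hJy : Jᵀ *ᵥ y = 0 := by
    have h := hadd (Jᵀ *ᵥ y, 0)
    simp only [Prod.mk_add_mk, zero_add, add_zero, saddlePointForm_apply, dotProduct_zero,
      mul_zero, add_eq_left, mul_eq_zero, two_ne_zero, false_or] at h
    rwa [dotProduct_comm, dotProduct_mulVec, ← mulVec_transpose, dotProduct_self_eq_zero] at h
  obtain rfl : y = 0 := ker_mulVecLin_eq_bot_iff.mp (ker_mulVecLin_transpose_eq_bot hJ) y hJy
  rfl

theorem inertia_saddlePointForm (hH : ∀ d, d ≠ 0 → J *ᵥ d = 0 → 0 < d ⬝ᵥ H *ᵥ d)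
    (hJ : J.rank = Fintype.card β) :
    sigPos (saddlePointForm H J) = Fintype.card α ∧ sigNeg (saddlePointForm H J) = Fintype.card β ∧
      (saddlePointForm H J).radical = ⊥ := by
  have hnonneg : ∀ d, J *ᵥ d = 0 → 0 ≤ d ⬝ᵥ H *ᵥ d := fun d hJd => by
    rcases eq_or_ne d 0 with rfl | hd
    · simp
    · exact (hH d hd hJd).le
  have hrad := radical_saddlePointForm_eq_bot hH hJ
  have hpos := sigPos_saddlePointForm_le H J
  have hneg := sigNeg_saddlePointForm_le_rank hnonneg
  have htotal := sigPos_add_sigNeg_add_radical (Q := saddlePointForm H J)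
  rw [hrad, finrank_bot, finrank_prod, finrank_fintype_fun_eq_card,
    finrank_fintype_fun_eq_card] at htotal
  exact ⟨by omega, by omega, hrad⟩

end SaddlePoint

end Matrix

theorem saddle_point_inertia_general {n m : ℕ}
    (H : Matrix (Fin n) (Fin n) ℝ) (J : Matrix (Fin m) (Fin n) ℝ)
    (hJ : J.rank = m)
    (hK : (Matrix.fromBlocks H Jᵀ J 0).IsHermitian) :
    (Fintype.card {i : Fin n ⊕ Fin m // 0 < hK.eigenvalues i} = n ∧
     Fintype.card {i : Fin n ⊕ Fin m // hK.eigenvalues i < 0} = m ∧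
     Fintype.card {i : Fin n ⊕ Fin m // hK.eigenvalues i = 0} = 0)
    ↔
    (∀ d : Fin n → ℝ, d ≠ 0 → J.mulVec d = 0 → 0 < d ⬝ᵥ H.mulVec d) := by
  have hQ := equivalent_saddlePointForm H J
  rw [hK.card_pos_eigenvalues, hK.card_neg_eigenvalues, hK.card_zero_eigenvalues, hQ.sigPos_eq,
    hQ.sigNeg_eq, hQ.rank_radical_eq]
  constructor
  · rintro ⟨hpos, -, -⟩ d hd hJd
    by_contra! hHd
    simpa [hpos] using sigPos_saddlePointForm_lt hd hJd hHd
  · intro hH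
    obtain ⟨hpos, hneg, hrad⟩ := inertia_saddlePointForm hH (by simpa using hJ)
    rw [hpos, hneg, hrad, finrank_bot]
    simp

/-- **Inertia of the symmetric saddle-point KKT matrix.**
Let `H` be a symmetric `n × n` real matrix and `J` an `m × n` matrix of full row
rank `m`. The saddle-point matrix `K = [[H, Jᵀ], [J, 0]]` has inertia `(n, m, 0)`
(exactly `n` positive, `m` negative and no zero eigenvalues, counted with
multiplicity) iff `H` is positive definite on the null space of `J`, i.e.
`dᵀ H d > 0` for every nonzero `d` with `J d = 0`. -/
theorem saddle_point_inertia {n m : ℕ}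
    (H : Matrix (Fin n) (Fin n) ℝ) (J : Matrix (Fin m) (Fin n) ℝ)
    (hH : H.IsHermitian) (hJ : J.rank = m)
    (hK : (Matrix.fromBlocks H Jᵀ J 0).IsHermitian) :
    (Fintype.card {i : Fin n ⊕ Fin m // 0 < hK.eigenvalues i} = n ∧
     Fintype.card {i : Fin n ⊕ Fin m // hK.eigenvalues i < 0} = m ∧
     Fintype.card {i : Fin n ⊕ Fin m // hK.eigenvalues i = 0} = 0)
    ↔
    (∀ d : Fin n → ℝ, d ≠ 0 → J.mulVec d = 0 → 0 < d ⬝ᵥ H.mulVec d) :=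
  saddle_point_inertia_general H J hJ hK
end

section
/- Fix N ≥ 1, block sizes N_S and N_A, matrices C_0, C_1 ∈ ℝ^{N_S × N_A}, invertible N_A × N_A matrices A_1, …, A_N, and for each n ∈ {1, …, N} let B_n ∈ ℝ^{N·N_S × N_A} be the block-row matrix whose block rows of size N_S × N_A are: zero for rows 1, …, n−1; C_1 for row n; and C_0 for rows n+1, …, N. Let S_c = Σ_{n=1}^{N} B_n A_n⁻¹ B_nᵀ, viewed as an N × N array of N_S × N_S blocks. Then for all block indices i > j, the block (S_c)_{i,j} equals Σ_{n=1}^{j−1} C_0 A_n⁻¹ C_0ᵀ + C_0 A_j⁻¹ C_1ᵀ; in particular, for each column j all blocks strictly below the diagonal are identical (they do not depend on the row index i), and by symmetry the same holds for the blocks to the right of the diagonal in each row. Hence S_c is completely determined by its N diagonal blocks and N−1 first-subdiagonal blocks. -/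
/-! Block `(i, j)` of `B_n A_n⁻¹ B_nᵀ` is (block row `i` of `B_n`) `A_n⁻¹` (block row `j` of `B_n`)ᵀ.
For `j < i` the row `i` of `B_n` is `C_0` whenever row `j` is nonzero, so the term is
`C_0 A_n⁻¹ C_0ᵀ` for `n < j`, `C_0 A_j⁻¹ C_1ᵀ` for `n = j` and `0` for `n > j`; summing over `n`
gives the claim, and the row index `i` never enters. -/

open Matrix

namespace Matrix

variable {ι κ m k α : Type*}

theorem submatrix_prodMk_mul_mul_transpose [Fintype m] [NonUnitalNonAssocSemiring α]
    (b : Matrix (ι × κ) m α) (M : Matrix m m α) (i j : ι) :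
    (b * M * bᵀ).submatrix (Prod.mk i) (Prod.mk j) =
      b.submatrix (Prod.mk i) id * M * (b.submatrix (Prod.mk j) id)ᵀ :=
  rfl

theorem submatrix_sum {β : Type*} [AddCommMonoid α] (s : Finset β) (X : β → Matrix m k α)
    (f : ι → m) (g : κ → k) : (∑ n ∈ s, X n).submatrix f g = ∑ n ∈ s, (X n).submatrix f g := by
  ext
  simp only [submatrix_apply, sum_apply]

end Matrix

section Arrowhead

variable {ι κ m k α : Type*} [LinearOrder ι] [NonUnitalNonAssocSemiring α]

theorem coupling_blockRow_eq {C0 C1 : Matrix κ k α} {n : ι} {b : Matrix (ι × κ) k α}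
    (hb : ∀ j r c, b (j, r) c = if j < n then 0 else if j = n then C1 r c else C0 r c) (j : ι) :
    b.submatrix (Prod.mk j) id = if j < n then 0 else if j = n then C1 else C0 := by
  ext r c
  split_ifs <;> simp_all

theorem coupling_schur_term_block_of_lt [Fintype k] {C0 C1 : Matrix κ k α} {n : ι}
    {b : Matrix (ι × κ) k α}
    (hb : ∀ j r c, b (j, r) c = if j < n then 0 else if j = n then C1 r c else C0 r c)
    (M : Matrix k k α) {i j : ι} (hji : j < i) :
    (b * M * bᵀ).submatrix (Prod.mk i) (Prod.mk j) =
      if n < j then C0 * M * C0ᵀ else if n = j then C0 * M * C1ᵀ else 0 := by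
  rw [submatrix_prodMk_mul_mul_transpose, coupling_blockRow_eq hb, coupling_blockRow_eq hb]
  rcases lt_trichotomy n j with h | rfl | h
  · simp [not_lt.2 h.le, h.ne', not_lt.2 (h.trans hji).le, (h.trans hji).ne', h]
  · simp [not_lt.2 hji.le, hji.ne']
  · simp [h, h.ne', not_lt.2 h.le]

end Arrowhead

theorem Finset.sum_ite_lt_ite_eq {ι M : Type*} [Fintype ι] [LinearOrder ι]
    [LocallyFiniteOrderBot ι] [AddCommMonoid M] (f g : ι → M) (j : ι) :
    ∑ n, (if n < j then f n else if n = j then g n else 0) = ∑ n ∈ Finset.Iio j, f n + g j := by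
  have hsplit : ∀ n, (if n < j then f n else if n = j then g n else 0) =
      (if n < j then f n else 0) + if n = j then g n else 0 := fun n => by
    split_ifs <;> simp_all
  rw [Finset.sum_congr rfl fun n _ => hsplit n, Finset.sum_add_distrib, ← Finset.sum_filter,
    Finset.filter_gt_eq_Iio, Finset.sum_ite_eq']
  simp

theorem mpopf_global_schur_subdiagonal_general {N NS NA : ℕ}
    (C0 C1 : Matrix (Fin NS) (Fin NA) ℝ)
    (A : Fin N → Matrix (Fin NA) (Fin NA) ℝ)
    (B : Fin N → Matrix (Fin N × Fin NS) (Fin NA) ℝ)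
    (hB : ∀ (n j : Fin N) (r : Fin NS) (c : Fin NA),
      B n (j, r) c = if j < n then 0 else if j = n then C1 r c else C0 r c) :
    ∀ i j : Fin N, j < i →
      ∀ r c, (∑ n, B n * (A n)⁻¹ * (B n)ᵀ) (i, r) (j, c) =
        ((∑ n ∈ Finset.Iio j, C0 * (A n)⁻¹ * C0ᵀ) + C0 * (A j)⁻¹ * C1ᵀ) r c := by
  intro i j hji r c
  have hblock : (∑ n, B n * (A n)⁻¹ * (B n)ᵀ).submatrix (Prod.mk i) (Prod.mk j) =
      (∑ n ∈ Finset.Iio j, C0 * (A n)⁻¹ * C0ᵀ) + C0 * (A j)⁻¹ * C1ᵀ := by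
    rw [Matrix.submatrix_sum]
    simp_rw [coupling_schur_term_block_of_lt (hB _) _ hji]
    exact Finset.sum_ite_lt_ite_eq _ (fun n => C0 * (A n)⁻¹ * C1ᵀ) j
  exact congrFun₂ hblock r c

/-- **Replicated block structure of the global MPOPF Schur complement.**
With `B_n` the block-row matrices of the MPOPF coupling structure
(`0` before row `n`, `C_1` at row `n`, `C_0` after) and invertible blocks `A_n`,
the global Schur complement `S_c = Σ_n B_n A_n⁻¹ B_nᵀ`, viewed as an `N × N`
array of `N_S × N_S` blocks, satisfies for all block indices `i > j`:
`(S_c)_{i,j} = Σ_{n < j} C_0 A_n⁻¹ C_0ᵀ + C_0 A_j⁻¹ C_1ᵀ`.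
In particular, in each column all blocks strictly below the diagonal are
identical (independent of the row index `i`), so `S_c` is determined by its
diagonal and first-subdiagonal blocks. -/
theorem mpopf_global_schur_subdiagonal {N NS NA : ℕ}
    (C0 C1 : Matrix (Fin NS) (Fin NA) ℝ)
    (A : Fin N → Matrix (Fin NA) (Fin NA) ℝ) (hA : ∀ n, IsUnit (A n).det)
    (B : Fin N → Matrix (Fin N × Fin NS) (Fin NA) ℝ)
    (hB : ∀ (n j : Fin N) (r : Fin NS) (c : Fin NA),
      B n (j, r) c = if j < n then 0 else if j = n then C1 r c else C0 r c) :
    ∀ i j : Fin N, j < i →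
      ∀ r c, (∑ n, B n * (A n)⁻¹ * (B n)ᵀ) (i, r) (j, c) =
        ((∑ n ∈ Finset.Iio j, C0 * (A n)⁻¹ * C0ᵀ) + C0 * (A j)⁻¹ * C1ᵀ) r c :=
  mpopf_global_schur_subdiagonal_general C0 C1 A B hB
end
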